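/- Let n be a positive integer and let A be any n × n complex matrix. Then (8/π)^n · ∫_{ℂ^n} exp(−2 ∑_{j=1}^n |α_j|²) · ∏_{j=1}^n |∑_{k=1}^n α_k A_{k,j}|² · ∏_{j=1}^n (|α_j|² − 1/2) d²α = |Per(A)|². -/

import Mathlib

/-!
With `w(z) = (|z|² - 1/2) e^{-2|z|²}`, the integrand is `|∏ⱼ ∑ₖ αₖ Aₖⱼ|² ∏ₘ w(αₘ)`. Expanding the
product over all maps `p : [n] → [n]` turns it into a sum over pairs `(p, q)` of
`∏ⱼ A_{p j, j} · conj (∏ⱼ A_{q j, j}) · ∏ₘ αₘ^{aₘ} ᾱₘ^{bₘ} w(αₘ)`, where `aₘ`, `bₘ` count the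
preimages of `m` under `p` and `q`. By Fubini each term integrates to `∏ₘ M(aₘ, bₘ)` with
`M(a, b) = ∫ z^a z̄^b w(z)`. Rotation invariance gives `M(a, b) = 0` for `a ≠ b`, and the shift by
`1/2` in `w` makes `M(0, 0) = 0`; so only pairs with all `aₘ = bₘ ≥ 1`, i.e. pairs of permutations,
survive, each weighted by `M(1, 1)ⁿ = (π/8)ⁿ`. What remains is `(π/8)ⁿ · Per(A) · conj (Per(A))`.
-/

open MeasureTheory Real ComplexConjugate Finset

section Fibers

variable {ι κ : Type*} [Fintype ι] [DecidableEq κ]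

def fiberCard (p : ι → κ) (m : κ) : ℕ := Fintype.card {j // p j = m}

theorem prod_comp_eq_prod_pow_fiberCard [Fintype κ] {M : Type*} [CommMonoid M] (p : ι → κ)
    (x : κ → M) : ∏ j, x (p j) = ∏ m, x m ^ fiberCard p m := by
  rw [← Fintype.prod_fiberwise' p x]
  simp [fiberCard]

theorem fiberCard_eq_one_of_bijective {p : ι → κ} (hp : p.Bijective) (m : κ) :
    fiberCard p m = 1 :=
  Fintype.card_eq_one_iff.2 ⟨⟨_, (hp.2 m).choose_spec⟩,
    fun j => Subtype.ext <| hp.1 <| j.2.trans (hp.2 m).choose_spec.symm⟩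

variable [DecidableEq ι]

theorem exists_fiberCard_eq_zero_of_not_bijective {p : ι → ι} (hp : ¬ p.Bijective) :
    ∃ m, fiberCard p m = 0 := by
  obtain ⟨m, hm⟩ := not_forall.1 (mt Finite.surjective_iff_bijective.1 hp)
  exact ⟨m, Fintype.card_eq_zero_iff.2 ⟨fun j => hm ⟨j, j.2⟩⟩⟩

theorem prod_apply_fiberCard_eq_ite {M₀ : Type*} [CommMonoidWithZero M₀] {M : ℕ → ℕ → M₀}
    (h₀ : M 0 0 = 0) (hne : ∀ {a b}, a ≠ b → M a b = 0) (p q : ι → ι) :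
    ∏ m, M (fiberCard p m) (fiberCard q m) =
      if p.Bijective ∧ q.Bijective then M 1 1 ^ Fintype.card ι else 0 := by
  split_ifs with h
  · simp [fiberCard_eq_one_of_bijective h.1, fiberCard_eq_one_of_bijective h.2]
  · have hzero {a b : ℕ} (hab : a = 0 ∨ b = 0) : M a b = 0 := by
      obtain rfl | hne' := eq_or_ne a b
      · obtain rfl | rfl := hab <;> exact h₀
      · exact hne hne'
    obtain ⟨m, hm⟩ : ∃ m, fiberCard p m = 0 ∨ fiberCard q m = 0 := by
      obtain hp | hq := not_and_or.1 h
      · exact (exists_fiberCard_eq_zero_of_not_bijective hp).imp fun _ => .inl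
      · exact (exists_fiberCard_eq_zero_of_not_bijective hq).imp fun _ => .inr
    exact prod_eq_zero (mem_univ m) (hzero hm)

theorem prod_sum_mul_eq_sum_prod_pow_fiberCard {R : Type*} [CommSemiring R] (x : ι → R)
    (A : ι → ι → R) :
    ∏ j, ∑ k, x k * A k j = ∑ p : ι → ι, (∏ j, A (p j) j) * ∏ m, x m ^ fiberCard p m := by
  simp_rw [Fintype.prod_sum, prod_mul_distrib, prod_comp_eq_prod_pow_fiberCard, mul_comm]

end Fibers

theorem Matrix.permanent_eq_sum_bijective {ι R : Type*} [Fintype ι] [DecidableEq ι]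
    [CommSemiring R] (A : Matrix ι ι R) :
    A.permanent = ∑ p : ι → ι with p.Bijective, ∏ j, A (p j) j := by
  symm
  refine sum_bij' (fun p hp => Equiv.ofBijective p (mem_filter.1 hp).2) (fun σ _ => σ)
    (fun _ _ => mem_univ _) (fun σ _ => mem_filter.2 ⟨mem_univ _, σ.bijective⟩)
    (fun _ _ => rfl) (fun _ _ => Equiv.ext fun _ => rfl) (fun _ _ => rfl)

theorem integral_norm_pow_mul_exp_neg_mul_sq (m : ℕ) {b : ℝ} (hb : 0 < b) :
    ∫ z : ℂ, ‖z‖ ^ (2 * m) * rexp (-b * ‖z‖ ^ 2) = π * m.factorial / b ^ (m + 1) := by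
  have h := Complex.integral_rpow_mul_exp_neg_mul_rpow one_le_two
    (by linarith [(2 * m).cast_nonneg (α := ℝ)] : (-2 : ℝ) < (2 * m : ℕ)) hb
  simp_rw [rpow_two, rpow_natCast] at h
  rw [h, show (((2 * m : ℕ) : ℝ) + 2) / 2 = m + 1 by push_cast; ring,
    show -(((2 * m : ℕ) : ℝ) + 2) / 2 = -((m + 1 : ℕ) : ℝ) by push_cast; ring,
    Gamma_nat_eq_factorial, rpow_neg hb.le, rpow_natCast]
  field_simp

theorem integrable_norm_pow_mul_exp_neg_mul_sq (k : ℕ) {b : ℝ} (hb : 0 < b) :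
    Integrable fun z : ℂ => ‖z‖ ^ k * rexp (-b * ‖z‖ ^ 2) := by
  refine .of_integral_ne_zero ?_
  have h := Complex.integral_rpow_mul_exp_neg_mul_rpow one_le_two
    (by linarith [k.cast_nonneg (α := ℝ)] : (-2 : ℝ) < k) hb
  simp_rw [rpow_two, rpow_natCast] at h
  rw [h]
  have := Gamma_pos_of_pos (by positivity : (0 : ℝ) < (k + 2) / 2)
  positivity

theorem integral_pow_mul_conj_pow_mul_radial_of_ne {a b : ℕ} (hab : a ≠ b) (g : ℝ → ℂ) :
    ∫ z : ℂ, z ^ a * conj z ^ b * g ‖z‖ = 0 := by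
  set I := ∫ z : ℂ, z ^ a * conj z ^ b * g ‖z‖
  -- rotating by `u = exp (iπ / (a - b))` multiplies the integrand by `u ^ a * conj u ^ b = -1`
  set u : Circle := Circle.exp (π / ((a : ℝ) - b))
  have hu : (u : ℂ) ^ a * conj (u : ℂ) ^ b = -1 := by
    have hab' : ((a : ℂ) - b) ≠ 0 := sub_ne_zero.2 (by exact_mod_cast hab)
    rw [Circle.coe_exp, ← Complex.exp_conj, ← Complex.exp_nat_mul, ← Complex.exp_nat_mul,
      ← Complex.exp_add, map_mul, Complex.conj_ofReal, Complex.conj_I, ← Complex.exp_pi_mul_I]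
    congr 1
    push_cast
    field_simp
    ring
  have hrot : I = -I := calc
    I = ∫ z : ℂ, (u * z) ^ a * conj (u * z) ^ b * g ‖u * z‖ :=
      (integral_comp (rotation u) (fun z => z ^ a * conj z ^ b * g ‖z‖)).symm
    _ = ∫ z : ℂ, (u ^ a * conj (u : ℂ) ^ b) * (z ^ a * conj z ^ b * g ‖z‖) := by
      congr 1 with z
      simp only [map_mul, mul_pow, norm_mul, Circle.norm_coe, one_mul]
      ring
    _ = -I := by rw [hu, integral_const_mul, neg_one_mul]
  linear_combination hrot / 2

namespace PermanentIntegral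

noncomputable def weight (z : ℂ) : ℝ := (‖z‖ ^ 2 - 1 / 2) * rexp (-2 * ‖z‖ ^ 2)

noncomputable def moment (a b : ℕ) : ℂ := ∫ z : ℂ, z ^ a * conj z ^ b * weight z

noncomputable def integrand {ι : Type*} [Fintype ι] (A : ι → ι → ℂ) (α : ι → ℂ) : ℝ :=
  rexp (-2 * ∑ j, ‖α j‖ ^ 2) * (∏ j, ‖∑ k, α k * A k j‖ ^ 2) * ∏ j, (‖α j‖ ^ 2 - 1 / 2)

theorem integrable_pow_mul_conj_pow_mul_weight (a b : ℕ) :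
    Integrable fun z : ℂ => z ^ a * conj z ^ b * (weight z : ℂ) := by
  refine .mono' ((integrable_norm_pow_mul_exp_neg_mul_sq (a + b + 2) two_pos).add
    ((integrable_norm_pow_mul_exp_neg_mul_sq (a + b) two_pos).const_mul (1 / 2)))
    (by unfold weight; fun_prop) (.of_forall fun z => ?_)
  have hw : |‖z‖ ^ 2 - 1 / 2| ≤ ‖z‖ ^ 2 + 1 / 2 :=
    abs_le.2 ⟨by linarith [sq_nonneg ‖z‖], by linarith⟩
  calc ‖z ^ a * conj z ^ b * (weight z : ℂ)‖
      = ‖z‖ ^ (a + b) * (|‖z‖ ^ 2 - 1 / 2| * rexp (-2 * ‖z‖ ^ 2)) := by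
        rw [norm_mul, norm_mul, norm_pow, norm_pow, RCLike.norm_conj, Complex.norm_real,
          Real.norm_eq_abs, weight, abs_mul, abs_exp, pow_add]
    _ ≤ ‖z‖ ^ (a + b) * ((‖z‖ ^ 2 + 1 / 2) * rexp (-2 * ‖z‖ ^ 2)) := by gcongr
    _ = _ := by simp only [Pi.add_apply]; ring

theorem moment_of_ne {a b : ℕ} (hab : a ≠ b) : moment a b = 0 :=
  integral_pow_mul_conj_pow_mul_radial_of_ne hab fun t => ((t ^ 2 - 1 / 2) * rexp (-2 * t ^ 2) : ℝ)

theorem moment_self (a : ℕ) : moment a a = π * a * a.factorial / 2 ^ (a + 2) := by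
  have hpoly (z : ℂ) : z ^ a * conj z ^ a * (weight z : ℂ) =
      ((‖z‖ ^ (2 * (a + 1)) * rexp (-2 * ‖z‖ ^ 2) -
        1 / 2 * (‖z‖ ^ (2 * a) * rexp (-2 * ‖z‖ ^ 2)) : ℝ) : ℂ) := by
    rw [← mul_pow, Complex.mul_conj, Complex.normSq_eq_norm_sq, weight]
    push_cast
    ring
  rw [moment]
  simp_rw [hpoly]
  rw [integral_complex_ofReal, integral_sub (integrable_norm_pow_mul_exp_neg_mul_sq _ two_pos)
    ((integrable_norm_pow_mul_exp_neg_mul_sq _ two_pos).const_mul _), integral_const_mul,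
    integral_norm_pow_mul_exp_neg_mul_sq _ two_pos, integral_norm_pow_mul_exp_neg_mul_sq _ two_pos,
    Nat.factorial_succ]
  push_cast
  field_simp
  ring

variable {ι : Type*} [Fintype ι] [DecidableEq ι]

theorem integrand_eq_sum (A : ι → ι → ℂ) (α : ι → ℂ) :
    (integrand A α : ℂ) =
      ∑ p : ι → ι, ∑ q : ι → ι, (∏ j, A (p j) j) * conj (∏ j, A (q j) j) *
        ∏ m, (α m ^ fiberCard p m * conj (α m) ^ fiberCard q m * weight (α m)) := by
  have hweight : rexp (-2 * ∑ j, ‖α j‖ ^ 2) * ∏ j, (‖α j‖ ^ 2 - 1 / 2) = ∏ j, weight (α j) := by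
    rw [mul_sum, exp_sum, ← prod_mul_distrib]
    simp only [weight, mul_comm]
  have hsq : ((∏ j, ‖∑ k, α k * A k j‖ ^ 2 : ℝ) : ℂ) =
      (∏ j, ∑ k, α k * A k j) * conj (∏ j, ∑ k, α k * A k j) := by
    rw [map_prod, ← prod_mul_distrib, Complex.ofReal_prod]
    simp_rw [Complex.mul_conj', Complex.ofReal_pow]
  calc (integrand A α : ℂ)
      = (∏ j, ∑ k, α k * A k j) * conj (∏ j, ∑ k, α k * A k j) * ∏ m, (weight (α m) : ℂ) := by
        rw [integrand, mul_right_comm, hweight, Complex.ofReal_mul, hsq, Complex.ofReal_prod,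
          mul_comm]
    _ = _ := by
        rw [prod_sum_mul_eq_sum_prod_pow_fiberCard, map_sum, sum_mul_sum, sum_mul]
        refine sum_congr rfl fun p _ => ?_
        rw [sum_mul]
        refine sum_congr rfl fun q _ => ?_
        simp only [map_mul, map_prod, map_pow, prod_mul_distrib]
        ring

theorem integral_integrand_eq_sum (A : ι → ι → ℂ) :
    ((∫ α, integrand A α : ℝ) : ℂ) =
      ∑ p : ι → ι, ∑ q : ι → ι, (∏ j, A (p j) j) * conj (∏ j, A (q j) j) *
        ∏ m, moment (fiberCard p m) (fiberCard q m) := by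
  have hintegrable (p q : ι → ι) : Integrable fun α : ι → ℂ =>
      ∏ m, (α m ^ fiberCard p m * conj (α m) ^ fiberCard q m * weight (α m)) :=
    Integrable.fintype_prod fun m => integrable_pow_mul_conj_pow_mul_weight _ _
  simp_rw [← integral_complex_ofReal, integrand_eq_sum]
  rw [integral_finsetSum _ fun p _ =>
    integrable_finsetSum _ fun q _ => (hintegrable p q).const_mul _]
  refine sum_congr rfl fun p _ => ?_
  rw [integral_finsetSum _ fun q _ => (hintegrable p q).const_mul _]
  refine sum_congr rfl fun q _ => ?_
  rw [integral_const_mul, integral_fintype_prod_volume_eq_prod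
    fun m z => z ^ fiberCard p m * conj z ^ fiberCard q m * (weight z : ℂ)]
  rfl

theorem integral_integrand_eq (A : Matrix ι ι ℂ) :
    ∫ α, integrand A α = (π / 8) ^ Fintype.card ι * ‖A.permanent‖ ^ 2 := by
  have h₀ : moment 0 0 = 0 := by simp [moment_self]
  have h₁ : moment 1 1 = π / 8 := by norm_num [moment_self]
  apply Complex.ofReal_injective
  refine (integral_integrand_eq_sum A).trans ?_
  simp_rw [prod_apply_fiberCard_eq_ite h₀ moment_of_ne, h₁, mul_ite, mul_zero, ite_and,
    sum_ite_irrel, sum_const_zero, ← sum_filter]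
  rw [Complex.ofReal_mul, Complex.ofReal_pow, Complex.ofReal_pow, ← Complex.mul_conj',
    Matrix.permanent_eq_sum_bijective, map_sum, sum_mul_sum, mul_sum]
  refine sum_congr rfl fun p _ => ?_
  rw [mul_sum]
  refine sum_congr rfl fun q _ => ?_
  push_cast
  ring

end PermanentIntegral

theorem integral_eq_abs_permanent_sq_general (n : ℕ) (A : Matrix (Fin n) (Fin n) ℂ) :
    (8 / Real.pi) ^ n *
      ∫ α : Fin n → ℂ,
        Real.exp (-2 * ∑ j, ‖α j‖ ^ 2) *
          (∏ j, ‖∑ k, α k * A k j‖ ^ 2) *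
          ∏ j, (‖α j‖ ^ 2 - 1 / 2) =
    ‖A.permanent‖ ^ 2 := by
  refine (congrArg ((8 / π) ^ n * ·) (PermanentIntegral.integral_integrand_eq A)).trans ?_
  rw [Fintype.card_fin, ← mul_assoc, ← mul_pow, div_mul_div_cancel₀ pi_ne_zero,
    div_self (by norm_num), one_pow, one_mul]

/-- For any `n × n` complex matrix `A`,
`(8/π)^n · ∫_{ℂ^n} exp(−2 ∑ |α_j|²) · ∏_j |∑_k α_k A_{k,j}|² · ∏_j (|α_j|² − 1/2) d²α
  = |Per(A)|²`. -/
theorem integral_eq_abs_permanent_sq (n : ℕ) (hn : 0 < n) (A : Matrix (Fin n) (Fin n) ℂ) :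
    (8 / Real.pi) ^ n *
      ∫ α : Fin n → ℂ,
        Real.exp (-2 * ∑ j, ‖α j‖ ^ 2) *
          (∏ j, ‖∑ k, α k * A k j‖ ^ 2) *
          ∏ j, (‖α j‖ ^ 2 - 1 / 2) =
    ‖A.permanent‖ ^ 2 :=
  integral_eq_abs_permanent_sq_general n A
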